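/- arXiv:1603.04954 — 3 statements merged into one kernel-verified Lean document; each statement's English description precedes it below -/
import Mathlib

section
/- Let X ⊆ ℝⁿ be nonempty closed convex, f : ℝⁿ → ℝ be μ-strongly convex on X with L-Lipschitz gradient, μ ≤ L ≤ γ, and let x* be the minimizer of f over X. For x ∈ X define x̂ = Π_X(x − (1/γ)∇f(x)). Then ⟨x − x̂, x − x*⟩ ≥ (1/2)‖x̂ − x‖² + (μ/(2γ))‖x* − x‖². -/
/-! The projection x̂ of the gradient step u = x - γ⁻¹ ∇f(x) satisfies the variational inequality
⟪u - x̂, x* - x̂⟫ ≤ 0, i.e. γ ⟪x - x̂, x* - x̂⟫ ≤ ⟪∇f(x), x* - x̂⟫. Strong convexity at x, minimality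
of x* and the descent lemma f(x̂) ≤ f(x) + ⟪∇f(x), x̂ - x⟫ + (L/2)‖x̂ - x‖² bound the right-hand side
by (γ/2)‖x̂ - x‖² - (μ/2)‖x* - x‖², and ⟪x - x̂, x* - x̂⟫ = ‖x - x̂‖² - ⟪x - x̂, x - x*⟫. -/

open scoped RealInnerProductSpace

section

variable {E : Type*} [NormedAddCommGroup E] [InnerProductSpace ℝ E]

theorem inner_sub_le_zero_of_forall_norm_sub_le {K : Set E} (hK : Convex ℝ K) {u v : E}
    (hv : v ∈ K) (hmin : ∀ w ∈ K, ‖v - u‖ ≤ ‖w - u‖) : ∀ w ∈ K, ⟪u - v, w - v⟫ ≤ 0 := by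
  have : Nonempty K := ⟨⟨v, hv⟩⟩
  refine (norm_eq_iInf_iff_real_inner_le_zero hK hv).mp (le_antisymm ?_ ?_)
  · exact le_ciInf fun w => by simpa only [norm_sub_rev u] using hmin w w.2
  · exact ciInf_le ⟨0, Set.forall_mem_range.mpr fun _ => norm_nonneg _⟩ (⟨v, hv⟩ : K)

theorem Convex.le_add_inner_add_sq_of_lipschitz_gradient [CompleteSpace E] {s : Set E}
    (hs : Convex ℝ s) {f : E → ℝ} {g : E → E} (hg : ∀ x ∈ s, HasGradientAt f (g x) x) {L : ℝ}
    (hlip : ∀ x ∈ s, ∀ y ∈ s, ‖g x - g y‖ ≤ L * ‖x - y‖) {x y : E} (hx : x ∈ s) (hy : y ∈ s) :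
    f y ≤ f x + ⟪g x, y - x⟫ + (L / 2) * ‖y - x‖ ^ 2 := by
  set c : ℝ → E := fun t => x + t • (y - x)
  have hc : ∀ t ∈ Set.Icc (0 : ℝ) 1, c t ∈ s := fun t ht => hs.add_smul_sub_mem hx hy ht
  -- The Lipschitz bound on `g` makes `f` minus its quadratic model antitone along the segment.
  set φ : ℝ → ℝ := fun t => f (c t) - t * ⟪g x, y - x⟫ - (L / 2) * t ^ 2 * ‖y - x‖ ^ 2
  have hφ : ∀ t ∈ Set.Icc (0 : ℝ) 1,
      HasDerivAt φ (⟪g (c t), y - x⟫ - ⟪g x, y - x⟫ - L * t * ‖y - x‖ ^ 2) t := by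
    intro t ht
    have hct : HasDerivAt c (y - x) t := by
      simpa only [one_smul] using ((hasDerivAt_id' t).smul_const (y - x)).const_add x
    have hfc : HasDerivAt (f ∘ c) ⟪g (c t), y - x⟫ t := by
      simpa [InnerProductSpace.toDual_apply_apply] using
        (hg _ (hc t ht)).hasFDerivAt.comp_hasDerivAt t hct
    refine ((hfc.sub ((hasDerivAt_id' t).mul_const ⟪g x, y - x⟫)).sub
      (((hasDerivAt_pow 2 t).const_mul (L / 2)).mul_const (‖y - x‖ ^ 2))).congr_deriv ?_
    simp only [one_mul, Nat.cast_ofNat, Nat.add_one_sub_one, pow_one]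
    ring
  have hanti : AntitoneOn φ (Set.Icc 0 1) := by
    refine antitoneOn_of_hasDerivWithinAt_nonpos (convex_Icc 0 1)
      (fun t ht => (hφ t ht).continuousAt.continuousWithinAt)
      (fun t ht => (hφ t (interior_subset ht)).hasDerivWithinAt) fun t ht => ?_
    have ht' : t ∈ Set.Icc (0 : ℝ) 1 := interior_subset ht
    have hgap : ⟪g (c t) - g x, y - x⟫ ≤ L * t * ‖y - x‖ ^ 2 :=
      calc ⟪g (c t) - g x, y - x⟫ ≤ ‖g (c t) - g x‖ * ‖y - x‖ := real_inner_le_norm _ _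
        _ ≤ L * ‖c t - x‖ * ‖y - x‖ := by gcongr; exact hlip _ (hc t ht') _ hx
        _ = L * t * ‖y - x‖ ^ 2 := by
          simp only [c, add_sub_cancel_left, norm_smul, Real.norm_of_nonneg ht'.1]; ring
    rw [inner_sub_left] at hgap
    linarith
  have h01 := hanti (by simp) (by simp) zero_le_one
  simp only [φ, c, one_smul, add_sub_cancel, zero_smul, add_zero] at h01
  linarith

end

theorem stmt_1_general {n : ℕ} (X : Set (EuclideanSpace ℝ (Fin n)))
    (hXcv : Convex ℝ X)
    (f : EuclideanSpace ℝ (Fin n) → ℝ)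
    (g : EuclideanSpace ℝ (Fin n) → EuclideanSpace ℝ (Fin n))
    (hg : ∀ x, HasGradientAt f (g x) x)
    (μ L γ : ℝ) (hμ : 0 < μ) (hμL : μ ≤ L) (hLγ : L ≤ γ)
    (hsc : ∀ x ∈ X, ∀ y ∈ X, f y ≥ f x + ⟪g x, y - x⟫ + (μ/2) * ‖y - x‖^2)
    (hlip : ∀ x ∈ X, ∀ y ∈ X, ‖g x - g y‖ ≤ L * ‖x - y‖)
    (xstar : EuclideanSpace ℝ (Fin n)) (hxstar : xstar ∈ X)
    (hmin : ∀ z ∈ X, f xstar ≤ f z)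
    (x : EuclideanSpace ℝ (Fin n)) (hx : x ∈ X)
    (xhat : EuclideanSpace ℝ (Fin n)) (hhat : xhat ∈ X)
    (hproj : ∀ z ∈ X, ‖xhat - (x - (1/γ) • g x)‖ ≤ ‖z - (x - (1/γ) • g x)‖) :
    ⟪x - xhat, x - xstar⟫ ≥ (1/2) * ‖xhat - x‖^2 + (μ/(2*γ)) * ‖xstar - x‖^2 := by
  have hγ : 0 < γ := hμ.trans_le (hμL.trans hLγ)
  have hvar := inner_sub_le_zero_of_forall_norm_sub_le hXcv hhat hproj xstar hxstar
  have hdesc := hXcv.le_add_inner_add_sq_of_lipschitz_gradient (fun y _ => hg y) hlip hx hhat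
  have hgrad : ⟪g x, xstar - xhat⟫ ≤ (γ / 2) * ‖xhat - x‖ ^ 2 - (μ / 2) * ‖xstar - x‖ ^ 2 := by
    have hsplit : ⟪g x, xstar - xhat⟫ = ⟪g x, xstar - x⟫ - ⟪g x, xhat - x⟫ := by
      rw [← inner_sub_right, sub_sub_sub_cancel_right]
    linarith [hsc x hx xstar hxstar, hmin xhat hhat,
      mul_le_mul_of_nonneg_right hLγ (sq_nonneg ‖xhat - x‖)]
  have hstep : γ * ⟪x - xhat, xstar - xhat⟫ ≤ ⟪g x, xstar - xhat⟫ := by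
    rw [sub_right_comm, inner_sub_left, real_inner_smul_left] at hvar
    have := mul_nonpos_of_nonneg_of_nonpos hγ.le hvar
    rwa [mul_sub, ← mul_assoc, mul_one_div_cancel hγ.ne', one_mul, sub_nonpos] at this
  have hexpand : ⟪x - xhat, xstar - xhat⟫ = ‖xhat - x‖ ^ 2 - ⟪x - xhat, x - xstar⟫ := by
    rw [norm_sub_rev, ← real_inner_self_eq_norm_sq, ← inner_sub_right]
    congr 1; abel
  rw [ge_iff_le, ← mul_le_mul_iff_of_pos_left hγ]
  calc γ * ((1 / 2) * ‖xhat - x‖ ^ 2 + (μ / (2 * γ)) * ‖xstar - x‖ ^ 2)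
      = (γ / 2) * ‖xhat - x‖ ^ 2 + (μ / 2) * ‖xstar - x‖ ^ 2 := by field_simp
    _ ≤ γ * ⟪x - xhat, x - xstar⟫ := by rw [hexpand, mul_sub] at hstep; linarith

theorem stmt_1 {n : ℕ} (X : Set (EuclideanSpace ℝ (Fin n)))
    (hXne : X.Nonempty) (hXcl : IsClosed X) (hXcv : Convex ℝ X)
    (f : EuclideanSpace ℝ (Fin n) → ℝ)
    (g : EuclideanSpace ℝ (Fin n) → EuclideanSpace ℝ (Fin n))
    (hg : ∀ x, HasGradientAt f (g x) x)
    (μ L γ : ℝ) (hμ : 0 < μ) (hμL : μ ≤ L) (hLγ : L ≤ γ)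
    (hsc : ∀ x ∈ X, ∀ y ∈ X, f y ≥ f x + ⟪g x, y - x⟫ + (μ/2) * ‖y - x‖^2)
    (hlip : ∀ x ∈ X, ∀ y ∈ X, ‖g x - g y‖ ≤ L * ‖x - y‖)
    (xstar : EuclideanSpace ℝ (Fin n)) (hxstar : xstar ∈ X)
    (hmin : ∀ z ∈ X, f xstar ≤ f z)
    (x : EuclideanSpace ℝ (Fin n)) (hx : x ∈ X)
    (xhat : EuclideanSpace ℝ (Fin n)) (hhat : xhat ∈ X)
    (hproj : ∀ z ∈ X, ‖xhat - (x - (1/γ) • g x)‖ ≤ ‖z - (x - (1/γ) • g x)‖) :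
    ⟪x - xhat, x - xstar⟫ ≥ (1/2) * ‖xhat - x‖^2 + (μ/(2*γ)) * ‖xstar - x‖^2 :=
  stmt_1_general X hXcv f g hg μ L γ hμ hμL hLγ hsc hlip xstar hxstar hmin x hx xhat hhat hproj
end

section
/- Let X ⊆ ℝⁿ be nonempty closed convex, and for t = 1,...,T let f_t : ℝⁿ → ℝ be μ-strongly convex on X with L-Lipschitz gradient, with unique minimizer x_t* over X. Fix γ ≥ L and h ∈ (0,1], and generate x_{t+1} = x_t + h(Π_X(x_t − (1/γ)∇f_t(x_t)) − x_t) from an initial x_1 ∈ X. Then with ρ = (1 − hμ/γ)^{1/2}, ∑_{t=1}^T ‖x_t − x_t*‖ ≤ (1/(1−ρ))(‖x_1 − x_1*‖ − ρ‖x_T − x_T*‖) + (1/(1−ρ)) ∑_{t=2}^T ‖x_t* − x_{t-1}*‖. -/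
/-!
A projected gradient step with step size `1/γ ≤ 1/L` contracts the distance to the minimizer
`x*` of a `μ`-strongly convex function, `‖x̂ - x*‖² ≤ (1 - μ/γ) ‖x - x*‖²`: compare the
variational inequality of the projection with the descent lemma at `x̂` and strong convexity
at `x*`. Averaging with weight `h` and concavity of `√` turn this into
`‖x_{t+1} - x_t*‖ ≤ ρ ‖x_t - x_t*‖`, so `d_t = ‖x_t - x_t*‖` satisfies
`d_t ≤ ρ d_{t-1} + ‖x_t* - x_{t-1}*‖`. Summing over `t` gives
`(1 - ρ) ∑ d_t ≤ d_1 - ρ d_T + ∑ ‖x_t* - x_{t-1}*‖`.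
-/

open scoped RealInnerProductSpace
open Finset

section

variable {E : Type*} [NormedAddCommGroup E] [InnerProductSpace ℝ E]

theorem Convex.le_add_inner_add_of_gradient_lipschitz [CompleteSpace E] {X : Set E}
    (hX : Convex ℝ X) {f : E → ℝ} {g : E → E} (hg : ∀ z, HasGradientAt f (g z) z) {L : ℝ}
    (hlip : ∀ z ∈ X, ∀ w ∈ X, ‖g z - g w‖ ≤ L * ‖z - w‖) {x y : E} (hx : x ∈ X) (hy : y ∈ X) :
    f y ≤ f x + ⟪g x, y - x⟫ + L / 2 * ‖y - x‖ ^ 2 := by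
  set c : ℝ → E := fun s => x + s • (y - x)
  set φ : ℝ → ℝ := fun s => f (c s) - s * ⟪g x, y - x⟫ - L / 2 * s ^ 2 * ‖y - x‖ ^ 2
  have hφ : ∀ s, HasDerivAt φ (⟪g (c s), y - x⟫ - ⟪g x, y - x⟫ - L * s * ‖y - x‖ ^ 2) s := by
    intro s
    have hc : HasDerivAt c (y - x) s := by
      simpa [c] using ((hasDerivAt_id s).smul_const (y - x)).const_add x
    have hfc := (hg (c s)).hasFDerivAt.comp_hasDerivAt s hc
    simp only [InnerProductSpace.toDual_apply_apply] at hfc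
    refine ((hfc.sub ((hasDerivAt_id s).mul_const ⟪g x, y - x⟫)).sub
      (((hasDerivAt_pow 2 s).const_mul (L / 2)).mul_const (‖y - x‖ ^ 2))).congr_deriv ?_
    simp only [Nat.cast_ofNat]
    ring
  have hφ' : ∀ s ∈ interior (Set.Icc (0 : ℝ) 1),
      ⟪g (c s), y - x⟫ - ⟪g x, y - x⟫ - L * s * ‖y - x‖ ^ 2 ≤ 0 := by
    intro s hs
    rw [interior_Icc] at hs
    rw [sub_nonpos]
    have hcs : ‖c s - x‖ = s * ‖y - x‖ := by
      simp [c, norm_smul, abs_of_pos hs.1]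
    calc ⟪g (c s), y - x⟫ - ⟪g x, y - x⟫ = ⟪g (c s) - g x, y - x⟫ := (inner_sub_left ..).symm
      _ ≤ ‖g (c s) - g x‖ * ‖y - x‖ := real_inner_le_norm _ _
      _ ≤ L * ‖c s - x‖ * ‖y - x‖ := by
        gcongr
        exact hlip _ (hX.add_smul_sub_mem hx hy (Set.Ioo_subset_Icc_self hs)) _ hx
      _ = L * s * ‖y - x‖ ^ 2 := by rw [hcs]; ring
  have hanti := antitoneOn_of_hasDerivWithinAt_nonpos (convex_Icc 0 1)
    (HasDerivAt.continuousOn fun s _ => hφ s) (fun s _ => (hφ s).hasDerivWithinAt) hφ'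
  have h10 : f y - ⟪g x, y - x⟫ - L / 2 * ‖y - x‖ ^ 2 ≤ f x := by
    simpa [φ, c] using
      hanti (Set.left_mem_Icc.2 zero_le_one) (Set.right_mem_Icc.2 zero_le_one) zero_le_one
  linarith

theorem real_inner_sub_le_zero_of_forall_norm_sub_le {X : Set E} (hX : Convex ℝ X) {u p : E}
    (hp : p ∈ X) (hmin : ∀ z ∈ X, ‖p - u‖ ≤ ‖z - u‖) {z : E} (hz : z ∈ X) :
    ⟪u - p, z - p⟫ ≤ 0 := by
  have : Nonempty X := ⟨⟨p, hp⟩⟩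
  refine (norm_eq_iInf_iff_real_inner_le_zero hX hp).1 (le_antisymm ?_ ?_) z hz
  · exact le_ciInf fun w => by simpa only [norm_sub_rev u] using hmin w w.2
  · exact ciInf_le (⟨0, Set.forall_mem_range.2 fun _ => norm_nonneg _⟩ :
      BddBelow (Set.range fun w : X => ‖u - w‖)) ⟨p, hp⟩

theorem norm_projected_gradient_sub_sq_le [CompleteSpace E] {X : Set E} (hX : Convex ℝ X)
    {f : E → ℝ} {g : E → E} (hg : ∀ z, HasGradientAt f (g z) z) {μ L γ : ℝ} (hγ : 0 < γ)
    (hLγ : L ≤ γ) (hsc : ∀ x ∈ X, ∀ y ∈ X, f y ≥ f x + ⟪g x, y - x⟫ + (μ / 2) * ‖y - x‖ ^ 2)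
    (hlip : ∀ z ∈ X, ∀ w ∈ X, ‖g z - g w‖ ≤ L * ‖z - w‖)
    {x xs xh : E} (hx : x ∈ X) (hxs : xs ∈ X) (hxh : xh ∈ X) (hmin : ∀ z ∈ X, f xs ≤ f z)
    (hproj : ∀ z ∈ X, ‖xh - (x - (1 / γ) • g x)‖ ≤ ‖z - (x - (1 / γ) • g x)‖) :
    ‖xh - xs‖ ^ 2 ≤ (1 - μ / γ) * ‖x - xs‖ ^ 2 := by
  have hvi := real_inner_sub_le_zero_of_forall_norm_sub_le hX hxh hproj hxs
  rw [sub_right_comm, inner_sub_left, real_inner_smul_left] at hvi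
  have hdescent := hX.le_add_inner_add_of_gradient_lipschitz hg hlip hx hxh
  have hgap : ⟪g x, xs - xh⟫ ≤ L / 2 * ‖x - xh‖ ^ 2 - μ / 2 * ‖x - xs‖ ^ 2 := by
    have hsplit : ⟪g x, xs - xh⟫ = ⟪g x, xs - x⟫ - ⟪g x, xh - x⟫ := by
      rw [← inner_sub_right, sub_sub_sub_cancel_right]
    rw [norm_sub_rev x, norm_sub_rev x]
    linarith [hsc x hx xs hxs, hmin xh hxh]
  have hpol := norm_sub_sq_real (x - xh) (xs - xh)
  rw [sub_sub_sub_cancel_right, norm_sub_rev xs] at hpol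
  have hkey : γ * ‖xh - xs‖ ^ 2 ≤ (γ - μ) * ‖x - xs‖ ^ 2 := by
    have : γ * ⟪x - xh, xs - xh⟫ ≤ ⟪g x, xs - xh⟫ := by
      have := mul_le_mul_of_nonneg_left hvi hγ.le
      field_simp at this
      linarith
    nlinarith [mul_nonneg (sub_nonneg.2 hLγ) (sq_nonneg ‖x - xh‖)]
  rw [one_sub_div hγ.ne', div_mul_eq_mul_div, le_div_iff₀ hγ]
  linarith

theorem norm_add_smul_sub_sub_le {x xh xs : E} {h c : ℝ} (hh0 : 0 ≤ h) (hh1 : h ≤ 1) (hc : 0 ≤ c)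
    (hxh : ‖xh - xs‖ ^ 2 ≤ c * ‖x - xs‖ ^ 2) :
    ‖x + h • (xh - x) - xs‖ ≤ √(1 - h + h * c) * ‖x - xs‖ := by
  have hxh' : ‖xh - xs‖ ≤ √c * ‖x - xs‖ := by
    rw [← Real.sqrt_sq (norm_nonneg (xh - xs)), ← Real.sqrt_sq (norm_nonneg (x - xs)),
      ← Real.sqrt_mul hc]
    exact Real.sqrt_le_sqrt hxh
  have hconc : (1 - h) * √1 + h * √c ≤ √((1 - h) * 1 + h * c) :=
    Real.strictConcaveOn_sqrt.concaveOn.2 (Set.mem_Ici.2 zero_le_one) (Set.mem_Ici.2 hc)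
      (sub_nonneg.2 hh1) hh0 (sub_add_cancel 1 h)
  simp only [Real.sqrt_one, mul_one] at hconc
  calc ‖x + h • (xh - x) - xs‖ = ‖(1 - h) • (x - xs) + h • (xh - xs)‖ := by congr 1; module
    _ ≤ (1 - h) * ‖x - xs‖ + h * ‖xh - xs‖ := by
      refine (norm_add_le _ _).trans_eq ?_
      rw [norm_smul_of_nonneg (sub_nonneg.2 hh1), norm_smul_of_nonneg hh0]
    _ ≤ ((1 - h) + h * √c) * ‖x - xs‖ := by nlinarith
    _ ≤ √(1 - h + h * c) * ‖x - xs‖ := by gcongr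

theorem Convex.mem_of_add_smul_sub_recursion {X : Set E} (hX : Convex ℝ X) {x xh : ℕ → E}
    {h : ℝ} (hh0 : 0 ≤ h) (hh1 : h ≤ 1) {T : ℕ} (hx1 : x 1 ∈ X)
    (hxh : ∀ t ∈ Icc 1 T, xh t ∈ X) (hupd : ∀ t ∈ Icc 1 T, x (t + 1) = x t + h • (xh t - x t)) :
    ∀ t ∈ Icc 1 T, x t ∈ X := by
  intro t ht
  obtain ⟨h1t, htT⟩ := Finset.mem_Icc.1 ht
  induction t, h1t using Nat.le_induction with
  | base => exact hx1
  | succ t h1t ih =>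
    have ht' : t ∈ Icc 1 T := Finset.mem_Icc.2 ⟨h1t, by omega⟩
    rw [hupd t ht']
    exact hX.add_smul_sub_mem (ih ht' (by omega)) (hxh t ht') ⟨hh0, hh1⟩

end

theorem one_sub_mul_sum_le_of_le_mul_add {d e : ℕ → ℝ} {ρ : ℝ} {T : ℕ} (hT : 1 ≤ T)
    (hrec : ∀ t ∈ Icc 2 T, d t ≤ ρ * d (t - 1) + e t) :
    (1 - ρ) * ∑ t ∈ Icc 1 T, d t ≤ d 1 - ρ * d T + ∑ t ∈ Icc 2 T, e t := by
  induction T, hT using Nat.le_induction with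
  | base => simp [sub_mul]
  | succ T hT ih =>
    have hlast := hrec (T + 1) (mem_Icc.2 ⟨by omega, le_rfl⟩)
    rw [Nat.add_sub_cancel] at hlast
    rw [sum_Icc_succ_top (by omega), sum_Icc_succ_top (by omega)]
    have := ih fun t ht => hrec t (Icc_subset_Icc_right T.le_succ ht)
    linarith

theorem sum_le_of_le_mul_add {d e : ℕ → ℝ} {ρ : ℝ} {T : ℕ} (hT : 1 ≤ T) (hρ : ρ < 1)
    (hrec : ∀ t ∈ Icc 2 T, d t ≤ ρ * d (t - 1) + e t) :
    ∑ t ∈ Icc 1 T, d t ≤ 1 / (1 - ρ) * (d 1 - ρ * d T) + 1 / (1 - ρ) * ∑ t ∈ Icc 2 T, e t := by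
  rw [← mul_add, one_div_mul_eq_div, le_div_iff₀ (sub_pos.2 hρ), mul_comm]
  exact one_sub_mul_sum_le_of_le_mul_add hT hrec

theorem stmt_3_general {n : ℕ} (X : Set (EuclideanSpace ℝ (Fin n)))
    (hXcv : Convex ℝ X)
    (T : ℕ) (hT : 1 ≤ T)
    (f : ℕ → EuclideanSpace ℝ (Fin n) → ℝ)
    (g : ℕ → EuclideanSpace ℝ (Fin n) → EuclideanSpace ℝ (Fin n))
    (hg : ∀ t x, HasGradientAt (f t) (g t x) x)
    (μ L γ h : ℝ) (hμ : 0 < μ) (hμL : μ ≤ L) (hLγ : L ≤ γ)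
    (hh0 : 0 < h) (hh1 : h ≤ 1)
    (hsc : ∀ t ∈ Finset.Icc 1 T, ∀ x ∈ X, ∀ y ∈ X,
        f t y ≥ f t x + ⟪g t x, y - x⟫ + (μ/2) * ‖y - x‖^2)
    (hlip : ∀ t ∈ Finset.Icc 1 T, ∀ x ∈ X, ∀ y ∈ X, ‖g t x - g t y‖ ≤ L * ‖x - y‖)
    (xstar : ℕ → EuclideanSpace ℝ (Fin n))
    (hxstar : ∀ t ∈ Finset.Icc 1 T, xstar t ∈ X)
    (hmin : ∀ t ∈ Finset.Icc 1 T, ∀ z ∈ X, f t (xstar t) ≤ f t z)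
    (x : ℕ → EuclideanSpace ℝ (Fin n)) (hx1 : x 1 ∈ X)
    (xhat : ℕ → EuclideanSpace ℝ (Fin n))
    (hhat : ∀ t ∈ Finset.Icc 1 T, xhat t ∈ X)
    (hproj : ∀ t ∈ Finset.Icc 1 T, ∀ z ∈ X,
        ‖xhat t - (x t - (1/γ) • g t (x t))‖ ≤ ‖z - (x t - (1/γ) • g t (x t))‖)
    (hupd : ∀ t ∈ Finset.Icc 1 T, x (t+1) = x t + h • (xhat t - x t)) :
    ∑ t ∈ Finset.Icc 1 T, ‖x t - xstar t‖
      ≤ (1 / (1 - Real.sqrt (1 - h * μ / γ))) *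
          (‖x 1 - xstar 1‖ - Real.sqrt (1 - h * μ / γ) * ‖x T - xstar T‖)
        + (1 / (1 - Real.sqrt (1 - h * μ / γ))) *
          ∑ t ∈ Finset.Icc 2 T, ‖xstar t - xstar (t-1)‖ := by
  have hγ : 0 < γ := by linarith
  have hρ : √(1 - h * μ / γ) < 1 :=
    (Real.sqrt_lt' one_pos).2 (by nlinarith [show 0 < h * μ / γ by positivity])
  have hmem := hXcv.mem_of_add_smul_sub_recursion hh0.le hh1 hx1 hhat hupd
  have hstep : ∀ t ∈ Icc 1 T, ‖x (t + 1) - xstar t‖ ≤ √(1 - h * μ / γ) * ‖x t - xstar t‖ := by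
    intro t ht
    rw [hupd t ht, show 1 - h * μ / γ = 1 - h + h * (1 - μ / γ) by ring]
    refine norm_add_smul_sub_sub_le hh0.le hh1 ?_ ?_
    · rw [sub_nonneg, div_le_one hγ]
      linarith
    · exact norm_projected_gradient_sub_sq_le hXcv (hg t) hγ hLγ (hsc t ht) (hlip t ht)
        (hmem t ht) (hxstar t ht) (hhat t ht) (hmin t ht) (hproj t ht)
  refine sum_le_of_le_mul_add hT hρ fun t ht => ?_
  obtain ⟨s, rfl⟩ : ∃ s, t = s + 1 := ⟨t - 1, by have := (Finset.mem_Icc.1 ht).1; omega⟩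
  have hs : s ∈ Icc 1 T := Finset.mem_Icc.2 (by have := Finset.mem_Icc.1 ht; omega)
  rw [Nat.add_sub_cancel]
  calc ‖x (s + 1) - xstar (s + 1)‖
      ≤ ‖x (s + 1) - xstar s‖ + ‖xstar s - xstar (s + 1)‖ := norm_sub_le_norm_sub_add_norm_sub ..
    _ ≤ √(1 - h * μ / γ) * ‖x s - xstar s‖ + ‖xstar (s + 1) - xstar s‖ := by
      rw [norm_sub_rev (xstar s)]
      exact add_le_add_left (hstep s hs) _

theorem stmt_3 {n : ℕ} (X : Set (EuclideanSpace ℝ (Fin n)))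
    (hXne : X.Nonempty) (hXcl : IsClosed X) (hXcv : Convex ℝ X)
    (T : ℕ) (hT : 1 ≤ T)
    (f : ℕ → EuclideanSpace ℝ (Fin n) → ℝ)
    (g : ℕ → EuclideanSpace ℝ (Fin n) → EuclideanSpace ℝ (Fin n))
    (hg : ∀ t x, HasGradientAt (f t) (g t x) x)
    (μ L γ h : ℝ) (hμ : 0 < μ) (hμL : μ ≤ L) (hLγ : L ≤ γ)
    (hh0 : 0 < h) (hh1 : h ≤ 1)
    (hsc : ∀ t ∈ Finset.Icc 1 T, ∀ x ∈ X, ∀ y ∈ X,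
        f t y ≥ f t x + ⟪g t x, y - x⟫ + (μ/2) * ‖y - x‖^2)
    (hlip : ∀ t ∈ Finset.Icc 1 T, ∀ x ∈ X, ∀ y ∈ X, ‖g t x - g t y‖ ≤ L * ‖x - y‖)
    (xstar : ℕ → EuclideanSpace ℝ (Fin n))
    (hxstar : ∀ t ∈ Finset.Icc 1 T, xstar t ∈ X)
    (hmin : ∀ t ∈ Finset.Icc 1 T, ∀ z ∈ X, f t (xstar t) ≤ f t z)
    (x : ℕ → EuclideanSpace ℝ (Fin n)) (hx1 : x 1 ∈ X)
    (xhat : ℕ → EuclideanSpace ℝ (Fin n))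
    (hhat : ∀ t ∈ Finset.Icc 1 T, xhat t ∈ X)
    (hproj : ∀ t ∈ Finset.Icc 1 T, ∀ z ∈ X,
        ‖xhat t - (x t - (1/γ) • g t (x t))‖ ≤ ‖z - (x t - (1/γ) • g t (x t))‖)
    (hupd : ∀ t ∈ Finset.Icc 1 T, x (t+1) = x t + h • (xhat t - x t)) :
    ∑ t ∈ Finset.Icc 1 T, ‖x t - xstar t‖
      ≤ (1 / (1 - Real.sqrt (1 - h * μ / γ))) *
          (‖x 1 - xstar 1‖ - Real.sqrt (1 - h * μ / γ) * ‖x T - xstar T‖)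
        + (1 / (1 - Real.sqrt (1 - h * μ / γ))) *
          ∑ t ∈ Finset.Icc 2 T, ‖xstar t - xstar (t-1)‖ :=
  stmt_3_general X hXcv T hT f g hg μ L γ h hμ hμL hLγ hh0 hh1 hsc hlip xstar hxstar hmin x hx1 xhat
    hhat hproj hupd
end

section
/- Let μ, γ, h be reals with 0 < μ ≤ γ and 0 < h ≤ 1, and suppose points x, x*, x̂ ∈ ℝⁿ satisfy ⟨x − x̂, x − x*⟩ ≥ (1/2)‖x̂ − x‖² + (μ/(2γ))‖x* − x‖². Then for x⁺ = x + h(x̂ − x), ‖x⁺ − x*‖² ≤ (1 − hμ/γ)‖x − x*‖². -/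
open scoped RealInnerProductSpace

theorem stmt_9 {n : ℕ} (μ γ h : ℝ) (hμ : 0 < μ) (hμγ : μ ≤ γ)
    (hh0 : 0 < h) (hh1 : h ≤ 1)
    (x xstar xhat : EuclideanSpace ℝ (Fin n))
    (hineq : ⟪x - xhat, x - xstar⟫ ≥ (1/2) * ‖xhat - x‖^2 + (μ/(2*γ)) * ‖xstar - x‖^2)
    (xplus : EuclideanSpace ℝ (Fin n)) (hplus : xplus = x + h • (xhat - x)) :
    ‖xplus - xstar‖^2 ≤ (1 - h * μ / γ) * ‖x - xstar‖^2 := by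
  have hrw : xplus - xstar = (x - xstar) - h • (x - xhat) := by
    rw [hplus]; module
  have hexp : ‖xplus - xstar‖^2
      = ‖x - xstar‖^2 + h^2 * ‖x - xhat‖^2 - 2 * h * ⟪x - xhat, x - xstar⟫ := by
    rw [hrw, @norm_sub_sq_real, norm_smul, real_inner_smul_right,
      real_inner_comm]
    simp [mul_pow, abs_of_pos hh0]
    ring
  have h1 : ‖x - xhat‖ = ‖xhat - x‖ := norm_sub_rev _ _
  have h2 : ‖xstar - x‖ = ‖x - xstar‖ := norm_sub_rev _ _
  rw [h1] at hexp; rw [h2] at hineq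
  have hγ : 0 < γ := lt_of_lt_of_le hμ hμγ
  have hsq : (0:ℝ) ≤ ‖xhat - x‖^2 := sq_nonneg _
  have hsq2 : (0:ℝ) ≤ ‖x - xstar‖^2 := sq_nonneg _
  have hfield : h * (μ/(2*γ)) * 2 = h * μ / γ := by field_simp
  nlinarith [mul_le_mul_of_nonneg_left hineq (le_of_lt hh0),
    mul_nonneg (mul_nonneg hh0.le (sub_nonneg.2 hh1)) hsq]
end
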